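/- Let 0 < a < b, λ ∈ [0,1], q > 1 and 1/p + 1/q = 1. With H = 2ab/(a+b), A = (a+b)/2, G = √(ab), and L = (b−a)/(ln b − ln a), the following inequality holds: |(1−λ)·H + λ·A − G²/L| ≤ (ab(b−a)/2^{1+1/q})·{ C₁(λ,p;a,b)^{1/p} + C₁(λ,p;b,a)^{1/p} }. -/

import Mathlib

/-!
With `φ(t) = ab / (tb + (1 - t)a)` one has `φ(1/2) = H`, `(φ(0) + φ(1)) / 2 = A` and
`∫₀¹ φ = G² / L`. Integrating by parts against `t - λ/2` on `[0, 1/2]` and against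
`t - 1 + λ/2` on `[1/2, 1]` turns the left-hand side into two integrals of `φ'`, and the
substitution `t ↦ 1 - t` turns the second into the first with `a` and `b` swapped. Hölder's
inequality against the constant `1` on `[0, 1/2]` bounds each by
`ab(b - a)/2 · C₁^{1/p} · (1/2)^{1/q}`.
-/

open MeasureTheory Set

/-- `C₁(λ, p; u, ϑ) = ∫_0^{1/2} |λ-2t|^p / (tϑ+(1-t)u)^{2p} dt` from Theorem 2.3. -/
noncomputable def C1p (lam p u v : ℝ) : ℝ :=
  ∫ t in (0:ℝ)..(1/2 : ℝ), |lam - 2 * t| ^ p / (t * v + (1 - t) * u) ^ (2 * p)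

open intervalIntegral

theorem intervalIntegral_le_integral_rpow_mul_length {g : ℝ → ℝ} {x y p q : ℝ}
    (hxy : x ≤ y) (hpq : p.HolderConjugate q) (hg : ContinuousOn g (Icc x y))
    (hg0 : ∀ t ∈ Icc x y, 0 ≤ g t) :
    ∫ t in x..y, g t ≤ (∫ t in x..y, g t ^ p) ^ (1 / p) * (y - x) ^ (1 / q) := by
  obtain ⟨C, hC⟩ := isCompact_Icc.exists_bound_of_continuousOn hg
  have hIoc : ∀ {P : ℝ → Prop}, (∀ t ∈ Icc x y, P t) →
      ∀ᵐ t ∂volume.restrict (Ioc x y), P t := fun hP =>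
    (ae_restrict_iff' measurableSet_Ioc).2 (ae_of_all _ fun t ht => hP t (Ioc_subset_Icc_self ht))
  have hg_mem : MemLp g (ENNReal.ofReal p) (volume.restrict (Ioc x y)) :=
    MemLp.of_bound ((hg.mono Ioc_subset_Icc_self).aestronglyMeasurable measurableSet_Ioc) C
      (hIoc hC)
  have holder := integral_mul_le_Lp_mul_Lq_of_nonneg hpq (hIoc hg0)
    (ae_of_all _ fun _ => zero_le_one) hg_mem (memLp_const (1 : ℝ))
  simpa [integral_of_le hxy, Real.one_rpow, hxy] using holder

theorem integral_sub_mul_deriv_eq {f f' : ℝ → ℝ} (lam : ℝ)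
    (hf : ∀ t ∈ uIcc (0:ℝ) (1/2), HasDerivAt f (f' t) t)
    (hf' : IntervalIntegrable f' volume 0 (1/2)) :
    ∫ t in (0:ℝ)..1/2, (t - lam / 2) * f' t
      = (1 - lam) / 2 * f (1/2) + lam / 2 * f 0 - ∫ t in (0:ℝ)..1/2, f t := by
  rw [integral_mul_deriv_eq_deriv_mul (fun t _ => (hasDerivAt_id' t).sub_const (lam / 2)) hf
    intervalIntegrable_const hf']
  simp only [one_mul]
  ring

noncomputable def harmonicSegment (u v t : ℝ) : ℝ := u * v / (t * v + (1 - t) * u)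

noncomputable def harmonicSegmentDeriv (u v t : ℝ) : ℝ :=
  -(u * v * (v - u)) / (t * v + (1 - t) * u) ^ 2

section HarmonicSegment

variable {u v : ℝ}

theorem mul_add_one_sub_mul_pos (hu : 0 < u) (hv : 0 < v) {t : ℝ} (ht : t ∈ Icc (0:ℝ) 1) :
    0 < t * v + (1 - t) * u := by
  rcases ht with ⟨h0, h1⟩
  rcases h0.lt_or_eq with h0 | rfl
  · nlinarith
  · simpa using hu

theorem hasDerivAt_harmonicSegment (hu : 0 < u) (hv : 0 < v) {t : ℝ} (ht : t ∈ Icc (0:ℝ) 1) :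
    HasDerivAt (harmonicSegment u v) (harmonicSegmentDeriv u v t) t := by
  have hlin : HasDerivAt (fun s => s * v + (1 - s) * u) (v - u) t :=
    (((hasDerivAt_id' t).mul_const v).add
      (((hasDerivAt_id' t).const_sub 1).mul_const u)).congr_deriv (by ring)
  exact ((hasDerivAt_const t (u * v)).div hlin (mul_add_one_sub_mul_pos hu hv ht).ne').congr_deriv
    (by rw [harmonicSegmentDeriv]; ring)

theorem continuousOn_harmonicSegment (hu : 0 < u) (hv : 0 < v) :
    ContinuousOn (harmonicSegment u v) (Icc 0 1) :=
  continuousOn_const.div (by fun_prop) fun _ ht => (mul_add_one_sub_mul_pos hu hv ht).ne'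

theorem continuousOn_harmonicSegmentDeriv (hu : 0 < u) (hv : 0 < v) :
    ContinuousOn (harmonicSegmentDeriv u v) (Icc 0 1) :=
  continuousOn_const.div (by fun_prop) fun _ ht =>
    pow_ne_zero 2 (mul_add_one_sub_mul_pos hu hv ht).ne'

theorem harmonicSegment_one_sub (u v t : ℝ) :
    harmonicSegment u v (1 - t) = harmonicSegment v u t := by
  simp only [harmonicSegment]
  ring_nf

theorem integral_harmonicSegment (hu : 0 < u) (hv : 0 < v) (huv : u ≠ v) :
    ∫ t in (0:ℝ)..1, harmonicSegment u v t = u * v * (Real.log v - Real.log u) / (v - u) := by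
  have hvu : v - u ≠ 0 := sub_ne_zero.2 huv.symm
  have hcomp : harmonicSegment u v = fun t => u * v * ((v - u) * t + u)⁻¹ := by
    ext t; simp only [harmonicSegment]; ring_nf
  rw [hcomp, integral_comp_mul_add (fun x => u * v * x⁻¹) hvu,
    intervalIntegral.integral_const_mul, mul_zero, zero_add, mul_one, sub_add_cancel,
    integral_inv_of_pos hu hv, Real.log_div hv.ne' hu.ne', smul_eq_mul]
  field_simp

theorem abs_mul_harmonicSegmentDeriv (hu : 0 < u) (hv : 0 < v) (lam : ℝ) {t : ℝ}
    (ht : t ∈ Icc (0:ℝ) 1) :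
    |(t - lam / 2) * harmonicSegmentDeriv u v t|
      = u * v * |v - u| / 2 * (|lam - 2 * t| / (t * v + (1 - t) * u) ^ 2) := by
  have hd := mul_add_one_sub_mul_pos hu hv ht
  rw [harmonicSegmentDeriv, abs_mul, abs_div, abs_neg, abs_mul, abs_mul, abs_of_pos hu,
    abs_of_pos hv, abs_of_pos (pow_pos hd 2), show t - lam / 2 = -(lam - 2 * t) / 2 by ring,
    abs_div, abs_neg, abs_two]
  ring

theorem abs_integral_mul_harmonicSegmentDeriv_le (hu : 0 < u) (hv : 0 < v) (lam : ℝ) {p q : ℝ}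
    (hpq : p.HolderConjugate q) :
    |∫ t in (0:ℝ)..1/2, (t - lam / 2) * harmonicSegmentDeriv u v t|
      ≤ u * v * |v - u| / 2 * (C1p lam p u v ^ (1 / p) * (1 / 2) ^ (1 / q)) := by
  have hsub : Icc (0:ℝ) (1/2) ⊆ Icc 0 1 := Icc_subset_Icc_right (by norm_num)
  have hpos : ∀ t ∈ Icc (0:ℝ) (1/2), 0 < t * v + (1 - t) * u :=
    fun t ht => mul_add_one_sub_mul_pos hu hv (hsub ht)
  have hC1p : ∫ t in (0:ℝ)..1/2, (|lam - 2 * t| / (t * v + (1 - t) * u) ^ 2) ^ p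
      = C1p lam p u v := by
    refine integral_congr fun t ht => ?_
    rw [uIcc_of_le (by norm_num)] at ht
    rw [Real.div_rpow (abs_nonneg _) (pow_nonneg (hpos t ht).le 2), ← Real.rpow_natCast,
      ← Real.rpow_mul (hpos t ht).le, Nat.cast_ofNat, mul_comm 2 p]
  have hholder := intervalIntegral_le_integral_rpow_mul_length (by norm_num : (0:ℝ) ≤ 1/2) hpq
    (g := fun t => |lam - 2 * t| / (t * v + (1 - t) * u) ^ 2)
    (ContinuousOn.div (by fun_prop) (by fun_prop) fun t ht => pow_ne_zero 2 (hpos t ht).ne')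
    (fun t ht => div_nonneg (abs_nonneg _) (pow_nonneg (hpos t ht).le 2))
  rw [hC1p, sub_zero] at hholder
  calc |∫ t in (0:ℝ)..1/2, (t - lam / 2) * harmonicSegmentDeriv u v t|
      ≤ ∫ t in (0:ℝ)..1/2, |(t - lam / 2) * harmonicSegmentDeriv u v t| :=
        abs_integral_le_integral_abs (by norm_num)
    _ = u * v * |v - u| / 2 * ∫ t in (0:ℝ)..1/2, |lam - 2 * t| / (t * v + (1 - t) * u) ^ 2 := by
        rw [← intervalIntegral.integral_const_mul]
        refine integral_congr fun t ht => ?_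
        rw [uIcc_of_le (by norm_num)] at ht
        exact abs_mul_harmonicSegmentDeriv hu hv lam (hsub ht)
    _ ≤ _ := mul_le_mul_of_nonneg_left hholder (by positivity)

theorem mean_combination_sub_logMean_eq (hu : 0 < u) (hv : 0 < v) (huv : u ≠ v)
    (lam : ℝ) :
    (1 - lam) * (2 * u * v / (u + v)) + lam * ((u + v) / 2)
        - u * v * (Real.log v - Real.log u) / (v - u)
      = (∫ t in (0:ℝ)..1/2, (t - lam / 2) * harmonicSegmentDeriv u v t)
        + ∫ t in (0:ℝ)..1/2, (t - lam / 2) * harmonicSegmentDeriv v u t := by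
  have hsub : uIcc (0:ℝ) (1/2) ⊆ Icc 0 1 := by
    rw [uIcc_of_le (by norm_num)]; exact Icc_subset_Icc_right (by norm_num)
  have hhalf : ∀ {x y : ℝ}, 0 < x → 0 < y →
      ∫ t in (0:ℝ)..1/2, (t - lam / 2) * harmonicSegmentDeriv x y t
        = (1 - lam) / 2 * harmonicSegment x y (1/2) + lam / 2 * harmonicSegment x y 0
          - ∫ t in (0:ℝ)..1/2, harmonicSegment x y t := fun hx hy =>
    integral_sub_mul_deriv_eq lam (fun t ht => hasDerivAt_harmonicSegment hx hy (hsub ht))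
      ((continuousOn_harmonicSegmentDeriv hx hy).mono hsub).intervalIntegrable
  have hreflect : ∫ t in (0:ℝ)..1/2, harmonicSegment v u t
      = ∫ t in (1/2:ℝ)..1, harmonicSegment u v t := by
    simp_rw [← harmonicSegment_one_sub u v]
    rw [integral_comp_sub_left (harmonicSegment u v)]
    norm_num
  have hsplit := integral_add_adjacent_intervals (μ := volume) (a := 0) (b := 1/2) (c := 1)
    ((continuousOn_harmonicSegment hu hv).mono hsub).intervalIntegrable
    ((continuousOn_harmonicSegment hu hv).mono (by
      rw [uIcc_of_le (by norm_num)]; exact Icc_subset_Icc_left (by norm_num))).intervalIntegrable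
  rw [hhalf hu hv, hhalf hv hu, hreflect, ← integral_harmonicSegment hu hv huv, ← hsplit]
  simp only [harmonicSegment]
  field_simp
  ring

end HarmonicSegment

theorem prop_means2_general (a b : ℝ) (ha : 0 < a) (hab : a < b)
    (lam : ℝ)
    (p q : ℝ) (hq : 1 < q) (hpq : 1 / p + 1 / q = 1) :
    |(1 - lam) * (2 * a * b / (a + b)) + lam * ((a + b) / 2) -
      Real.sqrt (a * b) ^ 2 / ((b - a) / (Real.log b - Real.log a))| ≤
      (a * b * (b - a) / (2:ℝ) ^ (1 + 1 / q)) *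
        (C1p lam p a b ^ (1 / p) + C1p lam p b a ^ (1 / p)) := by
  have hb : 0 < b := ha.trans hab
  have hconj : p.HolderConjugate q :=
    (Real.holderConjugate_iff.mpr ⟨hq, by simpa only [one_div, add_comm] using hpq⟩).symm
  have htwo : (2:ℝ) ^ (1 + 1 / q) = 2 / (1 / 2) ^ (1 / q) := by
    rw [Real.rpow_add two_pos, Real.rpow_one, Real.div_rpow zero_le_one zero_le_two, Real.one_rpow,
      div_div_eq_mul_div, div_one]
  rw [Real.sq_sqrt (mul_pos ha hb).le, div_div_eq_mul_div,
    mean_combination_sub_logMean_eq ha hb hab.ne lam]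
  calc _ ≤ _ := abs_add_le _ _
    _ ≤ _ := add_le_add (abs_integral_mul_harmonicSegmentDeriv_le ha hb lam hconj)
        (abs_integral_mul_harmonicSegmentDeriv_le hb ha lam hconj)
    _ = _ := by
      rw [abs_sub_comm a b, abs_of_pos (sub_pos.2 hab), htwo]
      field_simp

theorem prop_means2 (a b : ℝ) (ha : 0 < a) (hab : a < b)
    (lam : ℝ) (hlam : lam ∈ Icc (0:ℝ) 1)
    (p q : ℝ) (hq : 1 < q) (hpq : 1 / p + 1 / q = 1) :
    |(1 - lam) * (2 * a * b / (a + b)) + lam * ((a + b) / 2) -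
      Real.sqrt (a * b) ^ 2 / ((b - a) / (Real.log b - Real.log a))| ≤
      (a * b * (b - a) / (2:ℝ) ^ (1 + 1 / q)) *
        (C1p lam p a b ^ (1 / p) + C1p lam p b a ^ (1 / p)) :=
  prop_means2_general a b ha hab lam p q hq hpq
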